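/- arXiv:cs/0605139 — 2 statements merged into one kernel-verified Lean document; each statement's English description precedes it below -/
import Mathlib

section
/- Let n be a positive integer and f a Boolean function of n variables. Then AI(f) = ⌈n/2⌉ if and only if both matrices V(1_f) and V(0_f) have rank equal to ∑_{i=0}^{⌈n/2⌉−1} C(n,i) over F_2. -/
/-- Hamming weight of a point of `F_2^n`. -/
def wtB {n : ℕ} (X : Fin n → ZMod 2) : ℕ :=
  (Finset.univ.filter (fun i => X i = 1)).card

/-- Coefficient of the monomial `∏_{i ∈ S} x_i` in the algebraic normal form of `f`. -/
def anfCoeff {n : ℕ} (f : (Fin n → ZMod 2) → ZMod 2) (S : Finset (Fin n)) : ZMod 2 :=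
  ∑ x ∈ Finset.univ.filter (fun x : Fin n → ZMod 2 => ∀ i, x i = 1 → i ∈ S), f x

/-- Algebraic degree of a Boolean function (degree of its ANF). -/
def degB {n : ℕ} (f : (Fin n → ZMod 2) → ZMod 2) : ℕ :=
  (Finset.univ.filter (fun S : Finset (Fin n) => anfCoeff f S ≠ 0)).sup Finset.card

/-- `g` is an annihilator of `f` : `g` is nonzero and `f · g = 0`. -/
def IsAnnihilator {n : ℕ} (f g : (Fin n → ZMod 2) → ZMod 2) : Prop :=
  g ≠ 0 ∧ ∀ x, f x * g x = 0

/-- Algebraic immunity: minimal degree of an annihilator of `f` or of `f ⊕ 1`. -/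
noncomputable def AI {n : ℕ} (f : (Fin n → ZMod 2) → ZMod 2) : ℕ :=
  sInf {d | ∃ g, (IsAnnihilator f g ∨ IsAnnihilator (fun x => f x + 1) g) ∧ degB g = d}

/-- Matrix whose rows (indexed by the set `T`) are the evaluation vectors `v(X)`, `X ∈ T`,
of all monomials of degree at most `D`. -/
def VSet {n : ℕ} (D : ℕ) (T : Set (Fin n → ZMod 2)) :
    Matrix T {S : Finset (Fin n) // S.card ≤ D} (ZMod 2) :=
  fun x S => ∏ i ∈ S.1, (x : Fin n → ZMod 2) i

/-- Matrix whose rows (listed according to the enumeration `Y`) are the evaluation vectors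
`v(Y r)` of all monomials of degree at most `D`. -/
def VEnum {n : ℕ} (D : ℕ) {N : ℕ} (Y : Fin N → (Fin n → ZMod 2)) :
    Matrix (Fin N) {S : Finset (Fin n) // S.card ≤ D} (ZMod 2) :=
  fun r S => ∏ i ∈ S.1, Y r i

/-!
A Boolean function of degree at most `D` is determined by its ANF coefficients on the monomials
of degree at most `D`, and its restriction to a set `T` is `V(T)` applied to that coefficient
vector (ANF inversion is Möbius inversion on the subset lattice, and over `F_2` it works because
an interval `[T, S]` of finsets has an even number of elements unless `T = S`). Hence `V(T)` has
full column rank iff no nonzero function of degree `< ⌈n/2⌉` vanishes on `T`; for `T = 1_f` and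
`T = 0_f` this says that neither `f` nor `f ⊕ 1` has an annihilator of degree `< ⌈n/2⌉`.
Equality `AI(f) = ⌈n/2⌉` then follows because `AI(f) ≤ ⌈n/2⌉` always: one of `1_f`, `0_f` has at
most `2^(n-1)` points, fewer than the number of monomials of degree `≤ ⌈n/2⌉`, so the
corresponding matrix `V` has a nonzero kernel vector.
-/

open Finset Matrix

namespace BooleanFunction

variable {n : ℕ}

lemma mul_eq_zero_iff_eq_one_imp (a b : ZMod 2) : a * b = 0 ↔ (a = 1 → b = 0) := by
  revert a b; decide

lemma eq_zero_of_ne_one {a : ZMod 2} (h : a ≠ 1) : a = 0 := by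
  revert a; decide

def supportEquiv : (Fin n → ZMod 2) ≃ Finset (Fin n) where
  toFun x := {i | x i = 1}
  invFun U i := if i ∈ U then 1 else 0
  left_inv x := funext fun i => by
    by_cases h : x i = 1
    · simp [h]
    · simp [eq_zero_of_ne_one h]
  right_inv U := by ext i; by_cases h : i ∈ U <;> simp [h]

lemma prod_eq_ite_subset_supportEquiv (T : Finset (Fin n)) (x : Fin n → ZMod 2) :
    ∏ i ∈ T, x i = if T ⊆ supportEquiv x then 1 else 0 := by
  split_ifs with h
  · exact prod_eq_one fun i hi => by simpa [supportEquiv] using h hi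
  · obtain ⟨i, hiT, hix⟩ := not_subset.mp h
    exact prod_eq_zero hiT (eq_zero_of_ne_one (by simpa [supportEquiv] using hix))

lemma cast_card_Icc_finset_zmod_two {α : Type*} [DecidableEq α] (T S : Finset α) :
    ((Icc T S).card : ZMod 2) = if T = S then 1 else 0 := by
  by_cases hTS : T ⊆ S
  · rw [card_Icc_finset hTS]
    split_ifs with h
    · simp [h]
    · have hlt : T.card < S.card := card_lt_card (ssubset_of_subset_of_ne hTS h)
      rw [Nat.cast_pow, show ((2 : ℕ) : ZMod 2) = 0 from rfl, zero_pow (by omega)]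
  · rw [Icc_eq_empty hTS, if_neg (by rintro rfl; exact hTS subset_rfl)]
    simp

lemma sum_prod_filter_support_subset (T S : Finset (Fin n)) :
    ∑ x ∈ univ.filter (fun x : Fin n → ZMod 2 => ∀ i, x i = 1 → i ∈ S), ∏ i ∈ T, x i
      = if T = S then 1 else 0 := by
  simp_rw [prod_eq_ite_subset_supportEquiv, sum_boole, ← cast_card_Icc_finset_zmod_two]
  congr 1
  refine card_equiv supportEquiv fun x => ?_
  simp [supportEquiv, subset_iff, and_comm]

def anfEval (a : Finset (Fin n) → ZMod 2) (x : Fin n → ZMod 2) : ZMod 2 :=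
  ∑ S, a S * ∏ i ∈ S, x i

lemma anfCoeff_anfEval (a : Finset (Fin n) → ZMod 2) : anfCoeff (anfEval a) = a := by
  funext S
  simp only [anfCoeff, anfEval]
  rw [sum_comm]
  simp_rw [← mul_sum, sum_prod_filter_support_subset, mul_ite, mul_one, mul_zero]
  simp

lemma anfEval_anfCoeff (f : (Fin n → ZMod 2) → ZMod 2) : anfEval (anfCoeff f) = f :=
  Function.LeftInverse.rightInverse_of_card_le (f := anfCoeff) anfCoeff_anfEval
    (Fintype.card_congr (supportEquiv.arrowCongr (.refl _))).le f

lemma anfCoeff_eq_zero_iff {f : (Fin n → ZMod 2) → ZMod 2} : anfCoeff f = 0 ↔ f = 0 := by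
  refine ⟨fun h => ?_, fun h => ?_⟩
  · rw [← anfEval_anfCoeff f, h]
    funext x
    simp [anfEval]
  · subst h
    funext S
    simp [anfCoeff]

lemma degB_le_iff {g : (Fin n → ZMod 2) → ZMod 2} {D : ℕ} :
    degB g ≤ D ↔ ∀ S, anfCoeff g S ≠ 0 → S.card ≤ D := by
  simp [degB]

def extendByZero (D : ℕ) (c : {S : Finset (Fin n) // S.card ≤ D} → ZMod 2) :
    Finset (Fin n) → ZMod 2 :=
  fun S => if h : S.card ≤ D then c ⟨S, h⟩ else 0

lemma mulVec_VSet_apply (D : ℕ) (T : Set (Fin n → ZMod 2))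
    (c : {S : Finset (Fin n) // S.card ≤ D} → ZMod 2) (x : T) :
    (VSet D T *ᵥ c) x = anfEval (extendByZero D c) x := by
  have hpos (S : {S : Finset (Fin n) // S.card ≤ D}) : extendByZero D c S = c S := dif_pos S.2
  have hneg (S : {S : Finset (Fin n) // ¬S.card ≤ D}) : extendByZero D c S = 0 := dif_neg S.2
  rw [anfEval, ← Fintype.sum_subtype_add_sum_subtype (fun S : Finset (Fin n) => S.card ≤ D)]
  simp only [hpos, hneg, zero_mul, sum_const_zero, add_zero, mulVec, dotProduct, VSet]
  exact sum_congr rfl fun S _ => mul_comm _ _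

lemma extendByZero_eq_zero_iff {D : ℕ} {c : {S : Finset (Fin n) // S.card ≤ D} → ZMod 2} :
    extendByZero D c = 0 ↔ c = 0 := by
  refine ⟨fun h => funext fun S => ?_, fun h => funext fun S => ?_⟩
  · simpa [extendByZero, S.2] using congrFun h S.1
  · simp [extendByZero, h]

lemma extendByZero_anfCoeff_val {D : ℕ} {g : (Fin n → ZMod 2) → ZMod 2} (hg : degB g ≤ D) :
    extendByZero D (fun S => anfCoeff g S.1) = anfCoeff g := by
  funext S
  by_cases hS : S.card ≤ D
  · simp [extendByZero, hS]
  · simp only [extendByZero, dif_neg hS]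
    by_contra h
    exact hS (degB_le_iff.mp hg S (Ne.symm h))

lemma exists_mulVec_VSet_eq_zero_iff (D : ℕ) (T : Set (Fin n → ZMod 2)) :
    (∃ c, c ≠ 0 ∧ VSet D T *ᵥ c = 0) ↔
      ∃ g : (Fin n → ZMod 2) → ZMod 2, g ≠ 0 ∧ (∀ x ∈ T, g x = 0) ∧ degB g ≤ D := by
  constructor
  · rintro ⟨c, hc, hVc⟩
    have hcoeff : anfCoeff (anfEval (extendByZero D c)) = extendByZero D c := anfCoeff_anfEval _
    refine ⟨anfEval (extendByZero D c), fun h => hc ?_, fun x hx => ?_, ?_⟩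
    · rw [← extendByZero_eq_zero_iff, ← hcoeff, anfCoeff_eq_zero_iff.mpr h]
    · rw [← mulVec_VSet_apply D T c ⟨x, hx⟩, hVc, Pi.zero_apply]
    · rw [degB_le_iff, hcoeff]
      intro S hS
      by_contra hD
      exact hS (dif_neg hD)
  · rintro ⟨g, hg, hgT, hgD⟩
    refine ⟨fun S => anfCoeff g S.1, fun h => hg ?_, funext fun x => ?_⟩
    · rw [← anfCoeff_eq_zero_iff, ← extendByZero_anfCoeff_val hgD, extendByZero_eq_zero_iff, h]
    · rw [mulVec_VSet_apply, extendByZero_anfCoeff_val hgD, anfEval_anfCoeff]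
      exact hgT x x.2

lemma rank_eq_card_iff {m k K : Type*} [Fintype k] [Field K] (A : Matrix m k K) :
    A.rank = Fintype.card k ↔ ∀ c, A *ᵥ c = 0 → c = 0 := by
  have hdim := A.mulVecLin.finrank_range_add_finrank_ker
  rw [Module.finrank_fintype_fun_eq_card] at hdim
  simp_rw [← mulVecLin_apply]
  rw [rank, ← LinearMap.ker_eq_bot', ← Submodule.finrank_eq_zero]
  omega

lemma exists_mulVec_eq_zero_of_card_lt {m k K : Type*} [Fintype m] [Fintype k] [Field K]
    (A : Matrix m k K) (h : Fintype.card m < Fintype.card k) : ∃ c, c ≠ 0 ∧ A *ᵥ c = 0 := by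
  have hker := A.mulVecLin.ker_ne_bot_of_finrank_lt (by simpa using h)
  obtain ⟨c, hc, hc0⟩ := (Submodule.ne_bot_iff _).mp hker
  exact ⟨c, hc0, hc⟩

lemma card_finset_card_le (D : ℕ) :
    Fintype.card {S : Finset (Fin n) // S.card ≤ D} = ∑ i ∈ range (D + 1), n.choose i := by
  rw [Fintype.card_subtype, card_eq_sum_card_fiberwise (f := card) (t := range (D + 1))
    fun S hS => by simpa [Nat.lt_succ_iff] using hS]
  refine sum_congr rfl fun i hi => ?_
  have hlayer := Fintype.card_finset_len (α := Fin n) i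
  rw [Fintype.card_fin, Fintype.card_subtype] at hlayer
  rw [← hlayer, filter_filter]
  refine congrArg card (ext fun S => ?_)
  simp only [mem_filter, mem_univ, true_and, and_iff_right_iff_imp]
  rintro rfl
  simpa [Nat.lt_succ_iff] using hi

-- Complementation maps the sets of size `> k` to sets of size `< k`, and the sets of size
-- exactly `k` are counted on both sides.
lemma two_pow_card_lt_two_mul_card_finset_card_le {α : Type*} [Fintype α] [DecidableEq α]
    {k : ℕ} (hk : k ≤ Fintype.card α) (hk2 : Fintype.card α ≤ 2 * k) :
    2 ^ Fintype.card α < 2 * Fintype.card {S : Finset α // S.card ≤ k} := by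
  rw [Fintype.card_subtype]
  set A : Finset (Finset α) := {S | S.card ≤ k}
  have hunion : A ∪ A.image compl = univ := eq_univ_of_forall fun S => by
    by_cases hS : S.card ≤ k
    · simp [A, hS]
    · refine mem_union_right _ (mem_image.mpr ⟨Sᶜ, ?_, compl_compl S⟩)
      simp only [A, mem_filter, mem_univ, true_and, card_compl]
      omega
  obtain ⟨S₀, -, hS₀⟩ := exists_subset_card_eq (s := (univ : Finset α)) (by simpa using hk)
  have hinter : (A ∩ A.image compl).Nonempty := ⟨S₀, mem_inter.mpr ⟨by simp [A, hS₀],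
    mem_image.mpr ⟨S₀ᶜ, by simp only [A, mem_filter, mem_univ, true_and, card_compl]; omega,
      compl_compl S₀⟩⟩⟩
  have hcount := card_union_add_card_inter A (A.image compl)
  rw [hunion, card_univ, Fintype.card_finset, card_image_of_injective _ compl_injective] at hcount
  have := hinter.card_pos
  omega

lemma rank_VSet_eq_iff (D : ℕ) (T : Set (Fin n → ZMod 2)) :
    (VSet D T).rank = ∑ i ∈ range (D + 1), n.choose i ↔
      ∀ g : (Fin n → ZMod 2) → ZMod 2, g ≠ 0 → (∀ x ∈ T, g x = 0) → D < degB g := by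
  rw [← card_finset_card_le, rank_eq_card_iff]
  simpa [not_imp_not] using (exists_mulVec_VSet_eq_zero_iff D T).not

lemma exists_vanishing_of_card_lt {D : ℕ} {T : Set (Fin n → ZMod 2)} [Fintype T]
    (h : Fintype.card T < Fintype.card {S : Finset (Fin n) // S.card ≤ D}) :
    ∃ g : (Fin n → ZMod 2) → ZMod 2, g ≠ 0 ∧ (∀ x ∈ T, g x = 0) ∧ degB g ≤ D :=
  (exists_mulVec_VSet_eq_zero_iff D T).mp (exists_mulVec_eq_zero_of_card_lt _ h)

lemma card_setOf_eq_one_add_card_setOf_eq_zero (f : (Fin n → ZMod 2) → ZMod 2) :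
    Fintype.card {x | f x = 1} + Fintype.card {x | f x = 0} = 2 ^ n := by
  have h0 : Fintype.card {x | f x = 0} = Fintype.card {x // ¬f x = 1} :=
    Fintype.card_congr <|
      Equiv.subtypeEquivRight fun _ => ⟨fun h => h ▸ zero_ne_one, eq_zero_of_ne_one⟩
  have hle := Fintype.card_subtype_le (fun x : Fin n → ZMod 2 => f x = 1)
  rw [Fintype.card_fun, ZMod.card, Fintype.card_fin] at hle
  rw [h0, Fintype.card_subtype_compl, Fintype.card_fun, ZMod.card, Fintype.card_fin]
  exact Nat.add_sub_of_le hle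

lemma isAnnihilator_iff {f g : (Fin n → ZMod 2) → ZMod 2} :
    IsAnnihilator f g ↔ g ≠ 0 ∧ ∀ x ∈ {x | f x = 1}, g x = 0 := by
  simp only [IsAnnihilator, mul_eq_zero_iff_eq_one_imp, Set.mem_ofPred_eq]

lemma isAnnihilator_add_one_iff {f g : (Fin n → ZMod 2) → ZMod 2} :
    IsAnnihilator (fun x => f x + 1) g ↔ g ≠ 0 ∧ ∀ x ∈ {x | f x = 0}, g x = 0 := by
  simp [isAnnihilator_iff]

lemma exists_annihilator_degB_le_half (hn : 0 < n) (f : (Fin n → ZMod 2) → ZMod 2) :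
    ∃ g, (IsAnnihilator f g ∨ IsAnnihilator (fun x => f x + 1) g) ∧ degB g ≤ (n + 1) / 2 := by
  have hcols : 2 ^ n < 2 * Fintype.card {S : Finset (Fin n) // S.card ≤ (n + 1) / 2} := by
    simpa using two_pow_card_lt_two_mul_card_finset_card_le (α := Fin n) (k := (n + 1) / 2)
      (by simp; omega) (by simp; omega)
  have hsplit := card_setOf_eq_one_add_card_setOf_eq_zero f
  by_cases h1 :
      Fintype.card {x | f x = 1} < Fintype.card {S : Finset (Fin n) // S.card ≤ (n + 1) / 2}
  · obtain ⟨g, hg, hgT, hgD⟩ := exists_vanishing_of_card_lt h1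
    exact ⟨g, .inl (isAnnihilator_iff.mpr ⟨hg, hgT⟩), hgD⟩
  · obtain ⟨g, hg, hgT, hgD⟩ :=
      exists_vanishing_of_card_lt (T := {x | f x = 0}) (D := (n + 1) / 2) (by omega)
    exact ⟨g, .inr (isAnnihilator_add_one_iff.mpr ⟨hg, hgT⟩), hgD⟩

lemma AI_le_degB {f g : (Fin n → ZMod 2) → ZMod 2}
    (hg : IsAnnihilator f g ∨ IsAnnihilator (fun x => f x + 1) g) : AI f ≤ degB g :=
  Nat.sInf_le ⟨g, hg, rfl⟩

lemma le_AI_iff {f g₀ : (Fin n → ZMod 2) → ZMod 2}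
    (hg₀ : IsAnnihilator f g₀ ∨ IsAnnihilator (fun x => f x + 1) g₀) {k : ℕ} :
    k ≤ AI f ↔ ∀ g, IsAnnihilator f g ∨ IsAnnihilator (fun x => f x + 1) g → k ≤ degB g := by
  refine ⟨fun h g hg => h.trans (AI_le_degB hg), fun h => le_csInf ⟨_, g₀, hg₀, rfl⟩ ?_⟩
  rintro _ ⟨g, hg, rfl⟩
  exact h g hg

end BooleanFunction

open BooleanFunction in
/-- `AI(f) = ⌈n/2⌉` iff `V(1_f)` and `V(0_f)` both have rank
`∑_{i=0}^{⌈n/2⌉-1} C(n,i)` over `F_2`. -/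
theorem stmt_0 (n : ℕ) (hn : 0 < n) (f : (Fin n → ZMod 2) → ZMod 2) :
    AI f = (n + 1) / 2 ↔
      ((VSet ((n + 1) / 2 - 1) {x | f x = 1}).rank =
          ∑ i ∈ Finset.range ((n + 1) / 2), n.choose i ∧
        (VSet ((n + 1) / 2 - 1) {x | f x = 0}).rank =
          ∑ i ∈ Finset.range ((n + 1) / 2), n.choose i) := by
  obtain ⟨g₀, hg₀, hdeg₀⟩ := exists_annihilator_degB_le_half hn f
  have hrank (T : Set (Fin n → ZMod 2)) := rank_VSet_eq_iff ((n + 1) / 2 - 1) T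
  have hk : (n + 1) / 2 - 1 + 1 = (n + 1) / 2 := by omega
  have hlt (d : ℕ) : (n + 1) / 2 - 1 < d ↔ (n + 1) / 2 ≤ d := by omega
  simp only [hk, hlt] at hrank
  rw [← ((AI_le_degB hg₀).trans hdeg₀).ge_iff_eq, le_AI_iff hg₀, hrank, hrank]
  simp only [or_imp, forall_and, isAnnihilator_add_one_iff]
  simp only [isAnnihilator_iff, and_imp]
end

section
/- Let n = 2t+1 be an odd positive integer, let F be a Boolean function of n variables with AI(F) = t+1, enumerate 1_F = {Y_1,…,Y_{2^{n−1}}} and 0_F = {Z_1,…,Z_{2^{n−1}}}, and set W = V(0_F)·V(1_F)^{−1}, a 2^{n−1} × 2^{n−1} invertible matrix over F_2. Let 1 ≤ k ≤ 2^{n−1}, 1 ≤ i_1 < … < i_k ≤ 2^{n−1} and 1 ≤ j_1 < … < j_k ≤ 2^{n−1}, and suppose the k × k submatrix of W with rows i_1,…,i_k and columns j_1,…,j_k is invertible. Then the Boolean function f obtained from F by flipping the values at the points Z_{i_1},…,Z_{i_k}, Y_{j_1},…,Y_{j_k} (i.e., f(X) = F(X)⊕1 on these points and f(X) = F(X) elsewhere)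 satisfies AI(f) = t+1. -/
/-!
The Gram matrices of `V(1_F)` and `V(0_F)` coincide: their entries add up to the sum over the
whole cube of a monomial of degree at most `2t < n`, which vanishes. Since `V(1_F)` is
invertible, `W` is therefore orthogonal, `Wᵀ W = 1`.

An annihilator `g` of degree `≤ t` of the flipped function is determined by its vector `u` of
values on the `Y`s, and `W u` is its vector of values on the `Z`s. If `g` annihilates `f`, then
`u` is supported on the `j_b` and `W u` vanishes at the `i_a`, so the invertible minor forces
`u = 0`. If `g` annihilates `f ⊕ 1`, the same argument runs for `Wᵀ`, with `i` and `j`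
exchanged, because `u = Wᵀ (W u)`. Either way `g = 0`. The bound `AI ≤ t + 1` is the usual
dimension count.
-/

open Finset Matrix

section

variable {n : ℕ}

lemma zmod_two_eq_zero_or_eq_one (a : ZMod 2) : a = 0 ∨ a = 1 := by revert a; decide

def pointOfFinset (A : Finset (Fin n)) : Fin n → ZMod 2 := fun i => if i ∈ A then 1 else 0

def pointEquivFinset : (Fin n → ZMod 2) ≃ Finset (Fin n) where
  toFun x := univ.filter (x · = 1)
  invFun := pointOfFinset
  left_inv x := funext fun i => by
    rcases zmod_two_eq_zero_or_eq_one (x i) with h | h <;> simp [pointOfFinset, h]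
  right_inv A := by ext; simp [pointOfFinset]

lemma sum_eq_sum_pointOfFinset {M : Type*} [AddCommMonoid M] (h : (Fin n → ZMod 2) → M) :
    ∑ x, h x = ∑ A, h (pointOfFinset A) :=
  (pointEquivFinset.symm.sum_comp h).symm

lemma prod_pointOfFinset (T A : Finset (Fin n)) :
    ∏ i ∈ T, pointOfFinset A i = if T ⊆ A then 1 else 0 := by
  simp [pointOfFinset, prod_ite_zero, subset_iff]

lemma natCast_card_Icc_finset {α : Type*} [DecidableEq α] (A B : Finset α) :
    ((Icc A B).card : ZMod 2) = if A = B then 1 else 0 := by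
  by_cases hAB : A ⊆ B
  · rw [card_Icc_finset hAB, Nat.cast_pow, ZMod.natCast_self]
    rcases hAB.eq_or_ssubset with rfl | hlt
    · simp
    · rw [if_neg hlt.ne, zero_pow (Nat.sub_ne_zero_of_lt (card_lt_card hlt))]
  · rw [Icc_eq_empty (by simpa using hAB), if_neg (by rintro rfl; exact hAB subset_rfl)]
    simp

lemma anfCoeff_eq_sum_powerset (f : (Fin n → ZMod 2) → ZMod 2) (S : Finset (Fin n)) :
    anfCoeff f S = ∑ A ∈ S.powerset, f (pointOfFinset A) := by
  rw [anfCoeff, sum_filter, sum_eq_sum_pointOfFinset, ← sum_filter]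
  congr 1; ext A; simp [pointOfFinset, subset_iff]

lemma anfCoeff_prod (T S : Finset (Fin n)) :
    anfCoeff (fun x => ∏ i ∈ T, x i) S = if T = S then 1 else 0 := by
  rw [anfCoeff_eq_sum_powerset, ← natCast_card_Icc_finset]
  simp only [prod_pointOfFinset, sum_boole]
  congr 2; ext A; simp [and_comm]

lemma sum_anfCoeff_mul_prod (f : (Fin n → ZMod 2) → ZMod 2) (x : Fin n → ZMod 2) :
    ∑ S, anfCoeff f S * ∏ i ∈ S, x i = f x := by
  obtain ⟨B, rfl⟩ := pointEquivFinset.symm.surjective x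
  calc ∑ S, anfCoeff f S * ∏ i ∈ S, pointOfFinset B i
      = ∑ S, ∑ A, if A ⊆ S ∧ S ⊆ B then f (pointOfFinset A) else 0 := by
        refine sum_congr rfl fun S _ => ?_
        rw [anfCoeff_eq_sum_powerset, prod_pointOfFinset, mul_ite, mul_one, mul_zero,
          ← sum_filter]
        by_cases h : S ⊆ B
        · simp only [h, if_true, and_true]; congr 1; ext; simp
        · simp [h]
    _ = ∑ A, f (pointOfFinset A) * ((Icc A B).card : ZMod 2) := by
        rw [sum_comm]
        refine sum_congr rfl fun A _ => ?_
        rw [← sum_filter, sum_const, nsmul_eq_mul, mul_comm]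
        congr; ext; simp
    _ = f (pointOfFinset B) := by simp [natCast_card_Icc_finset]

def ofAnf (D : ℕ) (c : {S : Finset (Fin n) // S.card ≤ D} → ZMod 2) :
    (Fin n → ZMod 2) → ZMod 2 :=
  fun x => ∑ S, c S * ∏ i ∈ S.1, x i

lemma anfCoeff_ofAnf (D : ℕ) (c : {S : Finset (Fin n) // S.card ≤ D} → ZMod 2)
    (T : Finset (Fin n)) :
    anfCoeff (ofAnf D c) T = if h : T.card ≤ D then c ⟨T, h⟩ else 0 := by
  calc anfCoeff (ofAnf D c) T = ∑ S, c S * anfCoeff (fun x => ∏ i ∈ S.1, x i) T := by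
        simp only [anfCoeff, ofAnf, mul_sum]; exact sum_comm
    _ = ∑ S, if S.1 = T then c S else 0 := by
        simp only [anfCoeff_prod, mul_ite, mul_one, mul_zero]
    _ = _ := by
        split_ifs with h
        · rw [sum_eq_single ⟨T, h⟩ (fun S _ hS => if_neg fun e => hS (Subtype.ext e))
            (by simp), if_pos rfl]
        · exact sum_eq_zero fun S _ => if_neg fun hS : S.1 = T => h (hS ▸ S.2)

lemma card_le_degB {f : (Fin n → ZMod 2) → ZMod 2} {S : Finset (Fin n)}
    (h : anfCoeff f S ≠ 0) : S.card ≤ degB f :=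
  le_sup (mem_filter.2 ⟨mem_univ S, h⟩)

lemma degB_ofAnf_le (D : ℕ) (c : {S : Finset (Fin n) // S.card ≤ D} → ZMod 2) :
    degB (ofAnf D c) ≤ D :=
  Finset.sup_le fun S hS => by
    by_contra h
    exact (mem_filter.1 hS).2 (by rw [anfCoeff_ofAnf, dif_neg h])

lemma ofAnf_ne_zero {D : ℕ} {c : {S : Finset (Fin n) // S.card ≤ D} → ZMod 2} (hc : c ≠ 0) :
    ofAnf D c ≠ 0 := fun h => hc <| funext fun S => by
  simpa [h, anfCoeff, S.2] using (anfCoeff_ofAnf D c S.1).symm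

lemma ofAnf_anfCoeff_of_degB_le {D : ℕ} {g : (Fin n → ZMod 2) → ZMod 2} (hg : degB g ≤ D) :
    ofAnf D (fun S => anfCoeff g S.1) = g := funext fun x => by
  rw [← sum_anfCoeff_mul_prod g x]
  refine Fintype.sum_of_injective Subtype.val Subtype.val_injective _ _ (fun S hS => ?_)
    fun _ => rfl
  by_contra h
  exact hS ⟨⟨S, (card_le_degB (left_ne_zero_of_mul h)).trans hg⟩, rfl⟩

lemma IsAnnihilator.apply_eq_zero {f g : (Fin n → ZMod 2) → ZMod 2} (h : IsAnnihilator f g)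
    {x : Fin n → ZMod 2} (hx : f x = 1) : g x = 0 := by
  simpa [hx] using h.2 x

lemma AI_le_degB {f g : (Fin n → ZMod 2) → ZMod 2} (h : IsAnnihilator f g) : AI f ≤ degB g :=
  Nat.sInf_le ⟨g, Or.inl h, rfl⟩

lemma VEnum_mulVec_apply (D : ℕ) {N : ℕ} (Y : Fin N → (Fin n → ZMod 2))
    (c : {S : Finset (Fin n) // S.card ≤ D} → ZMod 2) (r : Fin N) :
    (VEnum D Y *ᵥ c) r = ofAnf D c (Y r) := by
  simp only [mulVec, dotProduct, VEnum, ofAnf, mul_comm]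

lemma VSet_mulVec_apply (D : ℕ) (T : Set (Fin n → ZMod 2)) [Fintype T]
    (c : {S : Finset (Fin n) // S.card ≤ D} → ZMod 2) (x : T) :
    (VSet D T *ᵥ c) x = ofAnf D c x := by
  simp only [mulVec, dotProduct, VSet, ofAnf, mul_comm]

lemma eq_zero_of_VEnum_mulVec_eq_zero {D N : ℕ} {F : (Fin n → ZMod 2) → ZMod 2}
    (hF : D < AI F)
    {Y : Fin N → (Fin n → ZMod 2)} (hY : ∀ x, F x = 1 → x ∈ Set.range Y)
    {c : {S : Finset (Fin n) // S.card ≤ D} → ZMod 2} (hc : VEnum D Y *ᵥ c = 0) : c = 0 := by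
  by_contra hc0
  have hann : IsAnnihilator F (ofAnf D c) := ⟨ofAnf_ne_zero hc0, fun x => by
    rcases zmod_two_eq_zero_or_eq_one (F x) with h | h
    · rw [h, zero_mul]
    · obtain ⟨r, rfl⟩ := hY x h
      rw [← VEnum_mulVec_apply, hc, Pi.zero_apply, mul_zero]⟩
  exact (AI_le_degB hann |>.trans (degB_ofAnf_le D c)).not_gt hF

lemma card_finset_card_le (n D : ℕ) :
    Fintype.card {S : Finset (Fin n) // S.card ≤ D} = ∑ i ∈ range (D + 1), n.choose i := by
  rw [Fintype.card_subtype, card_eq_sum_card_fiberwise (f := Finset.card) (t := range (D + 1))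
    (fun S hS => mem_range.2 (Nat.lt_succ_of_le (mem_filter.1 hS).2))]
  refine sum_congr rfl fun i hi => ?_
  have h := card_powersetCard i (univ : Finset (Fin n))
  rw [card_univ, Fintype.card_fin] at h
  rw [filter_filter, ← h, powersetCard_eq_filter, powerset_univ]
  congr 1; ext S
  simp only [mem_filter, mem_univ, true_and, and_iff_right_iff_imp]
  rintro rfl; exact Nat.le_of_lt_succ (mem_range.1 hi)

lemma card_finset_card_le_eq_two_pow (t : ℕ) :
    Fintype.card {S : Finset (Fin (2 * t + 1)) // S.card ≤ t} = 2 ^ (2 * t) := by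
  rw [card_finset_card_le, Nat.sum_range_choose_halfway, pow_mul]; rfl

lemma two_pow_lt_card_finset_card_le_succ (t : ℕ) :
    2 ^ (2 * t) < Fintype.card {S : Finset (Fin (2 * t + 1)) // S.card ≤ t + 1} := by
  rw [card_finset_card_le, sum_range_succ, ← card_finset_card_le, card_finset_card_le_eq_two_pow]
  exact Nat.lt_add_of_pos_right (Nat.choose_pos (by omega))

lemma exists_ofAnf_eq_zero_on {D : ℕ} (T : Finset (Fin n → ZMod 2))
    (hT : T.card < Fintype.card {S : Finset (Fin n) // S.card ≤ D}) :
    ∃ c, c ≠ 0 ∧ ∀ x ∈ T, ofAnf D c x = 0 := by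
  have hker := LinearMap.ker_ne_bot_of_finrank_lt
    (f := (VSet D (T : Set (Fin n → ZMod 2))).mulVecLin)
    (by simpa only [Module.finrank_fintype_fun_eq_card, coe_sort_coe, Fintype.card_coe] using hT)
  obtain ⟨c, hc, hc0⟩ := (Submodule.ne_bot_iff _).1 hker
  exact ⟨c, hc0, fun x hx => by
    rw [← VSet_mulVec_apply D T c ⟨x, hx⟩]; exact congrFun hc ⟨x, hx⟩⟩

lemma exists_annihilator_degB_le {t : ℕ} (hn : n = 2 * t + 1)
    (f : (Fin n → ZMod 2) → ZMod 2) :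
    ∃ g, (IsAnnihilator f g ∨ IsAnnihilator (fun x => f x + 1) g) ∧ degB g ≤ t + 1 := by
  subst hn
  classical
  have hsum : #{x | f x = 1} + #{x | ¬ f x = 1} = 2 * 2 ^ (2 * t) := by
      rw [card_filter_add_card_filter_not, card_univ, Fintype.card_fun, ZMod.card,
      Fintype.card_fin, pow_succ']
  rcases le_or_gt #{x | f x = 1} (2 ^ (2 * t)) with h | h
  · obtain ⟨c, hc0, hc⟩ := exists_ofAnf_eq_zero_on {x | f x = 1}
      (h.trans_lt (two_pow_lt_card_finset_card_le_succ t))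
    refine ⟨ofAnf (t + 1) c, Or.inl ⟨ofAnf_ne_zero hc0, fun x => ?_⟩, degB_ofAnf_le _ _⟩
    rcases zmod_two_eq_zero_or_eq_one (f x) with hx | hx
    · rw [hx, zero_mul]
    · rw [hc x (by simpa using hx), mul_zero]
  · obtain ⟨c, hc0, hc⟩ := exists_ofAnf_eq_zero_on {x | ¬ f x = 1}
      ((by omega : _ < 2 ^ (2 * t)).trans (two_pow_lt_card_finset_card_le_succ t))
    refine ⟨ofAnf (t + 1) c, Or.inr ⟨ofAnf_ne_zero hc0, fun x => ?_⟩, degB_ofAnf_le _ _⟩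
    rcases zmod_two_eq_zero_or_eq_one (f x) with hx | hx
    · rw [hc x (by simp [hx]), mul_zero]
    · show (f x + 1) * _ = 0
      rw [hx, CharTwo.add_self_eq_zero, zero_mul]

lemma AI_eq_of_forall_le_degB {t : ℕ} (hn : n = 2 * t + 1) {f : (Fin n → ZMod 2) → ZMod 2}
    (h : ∀ g, IsAnnihilator f g ∨ IsAnnihilator (fun x => f x + 1) g → t + 1 ≤ degB g) :
    AI f = t + 1 := by
  obtain ⟨g, hg, hdeg⟩ := exists_annihilator_degB_le hn f
  unfold AI
  exact le_antisymm (le_trans (Nat.sInf_le ⟨g, hg, rfl⟩) hdeg)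
    (le_csInf ⟨degB g, g, hg, rfl⟩ (by rintro _ ⟨g', hg', rfl⟩; exact h g' hg'))

lemma sum_prod_mul_prod_eq_zero {S T : Finset (Fin n)} (h : S.card + T.card < n) :
    ∑ x : Fin n → ZMod 2, (∏ i ∈ S, x i) * ∏ i ∈ T, x i = 0 := by
  have hST : S ∪ T ≠ univ := fun hU => by
    have := card_union_le S T
    rw [hU, card_univ, Fintype.card_fin] at this
    omega
  rw [sum_eq_sum_pointOfFinset]
  simp only [prod_pointOfFinset, ite_zero_mul_ite_zero, mul_one, ← union_subset_iff, sum_boole]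
  have hIcc : ({A | S ∪ T ⊆ A} : Finset (Finset (Fin n))) = Icc (S ∪ T) univ := by ext; simp
  rw [hIcc, natCast_card_Icc_finset, if_neg hST]

lemma sum_comp_add_sum_comp_eq_sum {M ι κ : Type*} [AddCommMonoid M] [Fintype ι] [Fintype κ]
    {F : (Fin n → ZMod 2) → ZMod 2}
    {Y : ι → (Fin n → ZMod 2)} (hYinj : Function.Injective Y)
    (hYran : Set.range Y = {x | F x = 1})
    {Z : κ → (Fin n → ZMod 2)} (hZinj : Function.Injective Z)
    (hZran : Set.range Z = {x | F x = 0})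
    (h : (Fin n → ZMod 2) → M) :
    ∑ r, h (Y r) + ∑ r, h (Z r) = ∑ x, h x := by
  have hdisj : ∀ r s, Y r ≠ Z s := fun r s hYZ => by
    have h1 : F (Y r) = 1 := (Set.ext_iff.1 hYran _).1 ⟨r, rfl⟩
    have h0 : F (Z s) = 0 := (Set.ext_iff.1 hZran _).1 ⟨s, rfl⟩
    rw [hYZ, h0] at h1
    exact zero_ne_one h1
  have hsurj : Function.Surjective (Sum.elim Y Z) := fun x => by
    rcases zmod_two_eq_zero_or_eq_one (F x) with hx | hx
    · obtain ⟨s, rfl⟩ := (Set.ext_iff.1 hZran x).2 hx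
      exact ⟨Sum.inr s, rfl⟩
    · obtain ⟨r, rfl⟩ := (Set.ext_iff.1 hYran x).2 hx
      exact ⟨Sum.inl r, rfl⟩
  calc ∑ r, h (Y r) + ∑ r, h (Z r) = ∑ p, h (Sum.elim Y Z p) :=
      (Fintype.sum_sum_type fun p => h (Sum.elim Y Z p)).symm
    _ = ∑ x, h x :=
      Fintype.sum_bijective _ ⟨hYinj.sumElim hZinj hdisj, hsurj⟩ _ _ fun _ => rfl

lemma transpose_VEnum_mul_VEnum {t N : ℕ} (hn : 2 * t < n) {F : (Fin n → ZMod 2) → ZMod 2}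
    {Y : Fin N → (Fin n → ZMod 2)} (hYinj : Function.Injective Y)
    (hYran : Set.range Y = {x | F x = 1})
    {Z : Fin N → (Fin n → ZMod 2)} (hZinj : Function.Injective Z)
    (hZran : Set.range Z = {x | F x = 0}) :
    (VEnum t Y)ᵀ * VEnum t Y = (VEnum t Z)ᵀ * VEnum t Z := by
  ext S T
  rw [← CharTwo.add_eq_zero]
  simp only [mul_apply, transpose_apply, VEnum]
  rw [sum_comp_add_sum_comp_eq_sum hYinj hYran hZinj hZran
    fun x => (∏ i ∈ S.1, x i) * ∏ i ∈ T.1, x i]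
  have := S.2
  have := T.2
  exact sum_prod_mul_prod_eq_zero (by omega)

lemma transpose_mul_self_eq_one_of_mul_eq {K m ι : Type*} [Field K] [Fintype m] [DecidableEq m]
    [Fintype ι] {A B : Matrix m ι K} {W : Matrix m m K} (hcard : Fintype.card ι = Fintype.card m)
    (hA : ∀ v, A *ᵥ v = 0 → v = 0) (hW : W * A = B) (hgram : Aᵀ * A = Bᵀ * B) :
    Wᵀ * W = 1 := by
  have hinj : Function.Injective A.mulVecLin := by
    rw [← LinearMap.ker_eq_bot, LinearMap.ker_eq_bot']; exact hA
  obtain ⟨R, hR⟩ := mulVec_surjective_iff_exists_right_inverse.1 <|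
    (LinearMap.injective_iff_surjective_of_finrank_eq_finrank (by simpa using hcard)).1 hinj
  calc Wᵀ * W = (A * R)ᵀ * (Wᵀ * W) * (A * R) := by rw [hR, transpose_one, one_mul, mul_one]
    _ = Rᵀ * ((W * A)ᵀ * (W * A)) * R := by simp only [transpose_mul, Matrix.mul_assoc]
    _ = (A * R)ᵀ * (A * R) := by rw [hW, ← hgram]; simp only [transpose_mul, Matrix.mul_assoc]
    _ = 1 := by rw [hR, transpose_one, one_mul]

lemma eq_zero_of_isUnit_det_submatrix {R m m' κ : Type*} [CommRing R] [Fintype m'] [Fintype κ]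
    [DecidableEq κ] (W : Matrix m m' R) (i : κ → m) {j : κ → m'} (hj : Function.Injective j)
    (hsub : IsUnit (W.submatrix i j).det) {u : m' → R} (hu : ∀ r ∉ Set.range j, u r = 0)
    (hWu : ∀ a, (W *ᵥ u) (i a) = 0) : u = 0 := by
  have hsubu : W.submatrix i j *ᵥ (u ∘ j) = 0 := funext fun a => by
    rw [Pi.zero_apply, ← hWu a]
    exact Fintype.sum_of_injective j hj _ _ (fun r hr => by simp [hu r hr]) fun _ => rfl
  have huj : u ∘ j = 0 :=
    mulVec_injective_of_isUnit ((isUnit_iff_isUnit_det _).2 hsub)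
      (hsubu.trans (mulVec_zero _).symm)
  funext r
  by_cases hr : r ∈ Set.range j
  · obtain ⟨a, rfl⟩ := hr; exact congrFun huj a
  · exact hu r hr

lemma succ_le_degB_of_flip {t N k : ℕ} {Y Z : Fin N → (Fin n → ZMod 2)}
    {W : Matrix (Fin N) (Fin N) (ZMod 2)} (hW : W * VEnum t Y = VEnum t Z)
    (hker : ∀ c, VEnum t Y *ᵥ c = 0 → c = 0) (horth : Wᵀ * W = 1)
    {i j : Fin k → Fin N} (hi : Function.Injective i) (hj : Function.Injective j)
    (hsub : IsUnit (W.submatrix i j).det) {f g : (Fin n → ZMod 2) → ZMod 2}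
    (hfY : ∀ r, f (Y r) = if r ∈ Set.range j then 0 else 1)
    (hfZ : ∀ r, f (Z r) = if r ∈ Set.range i then 1 else 0)
    (hg : IsAnnihilator f g ∨ IsAnnihilator (fun x => f x + 1) g) : t + 1 ≤ degB g := by
  by_contra! hdeg
  set c : {S : Finset (Fin n) // S.card ≤ t} → ZMod 2 := fun S => anfCoeff g S.1
  have hgc : ofAnf t c = g := ofAnf_anfCoeff_of_degB_le (Nat.le_of_lt_succ hdeg)
  have hu r : (VEnum t Y *ᵥ c) r = g (Y r) := by rw [VEnum_mulVec_apply, hgc]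
  have hw r : (VEnum t Z *ᵥ c) r = g (Z r) := by rw [VEnum_mulVec_apply, hgc]
  have hg0 : g ≠ 0 := by rcases hg with hg | hg <;> exact hg.1
  suffices VEnum t Y *ᵥ c = 0 from hg0 (by rw [← hgc, hker c this]; funext x; simp [ofAnf])
  rcases hg with hg | hg
  · refine eq_zero_of_isUnit_det_submatrix W i hj hsub (fun r hr => ?_) fun a => ?_
    · rw [hu, hg.apply_eq_zero (by rw [hfY, if_neg hr])]
    · rw [mulVec_mulVec, hW, hw, hg.apply_eq_zero (by rw [hfZ, if_pos ⟨a, rfl⟩])]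
  · have hVY : Wᵀ *ᵥ (VEnum t Z *ᵥ c) = VEnum t Y *ᵥ c := by
      rw [← hW, mulVec_mulVec, ← Matrix.mul_assoc, horth, Matrix.one_mul]
    have hw0 : VEnum t Z *ᵥ c = 0 := by
      refine eq_zero_of_isUnit_det_submatrix Wᵀ j hi
        (by rwa [← transpose_submatrix, det_transpose]) (fun r hr => ?_) fun b => ?_
      · rw [hw, hg.apply_eq_zero (show f (Z r) + 1 = 1 by rw [hfZ, if_neg hr, zero_add])]
      · rw [hVY, hu, hg.apply_eq_zero
          (show f (Y (j b)) + 1 = 1 by rw [hfY, if_pos ⟨b, rfl⟩, zero_add])]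
    rw [← hVY, hw0, mulVec_zero]

end

theorem stmt_6_general (n t : ℕ) (hn : n = 2 * t + 1)
    (F : (Fin n → ZMod 2) → ZMod 2) (hF : AI F = t + 1)
    (Y Z : Fin (2 ^ (n - 1)) → (Fin n → ZMod 2))
    (hYinj : Function.Injective Y) (hYran : Set.range Y = {x | F x = 1})
    (hZinj : Function.Injective Z) (hZran : Set.range Z = {x | F x = 0})
    (W : Matrix (Fin (2 ^ (n - 1))) (Fin (2 ^ (n - 1))) (ZMod 2))
    (hW : W * VEnum t Y = VEnum t Z)
    (k : ℕ)
    (i j : Fin k → Fin (2 ^ (n - 1))) (hi : StrictMono i) (hj : StrictMono j)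
    (hsub : IsUnit (W.submatrix i j).det) :
    AI (fun X => if (∃ a, Z (i a) = X) ∨ (∃ a, Y (j a) = X) then F X + 1 else F X)
      = t + 1 := by
  subst hn
  have hFY r : F (Y r) = 1 := (Set.ext_iff.1 hYran _).1 ⟨r, rfl⟩
  have hFZ r : F (Z r) = 0 := (Set.ext_iff.1 hZran _).1 ⟨r, rfl⟩
  have hYZ r s : Y r ≠ Z s := fun h => by simpa [h, hFZ] using hFY r
  have hZY r s : Z s ≠ Y r := (hYZ r s).symm
  have hker c : VEnum t Y *ᵥ c = 0 → c = 0 :=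
    eq_zero_of_VEnum_mulVec_eq_zero (hF ▸ t.lt_succ_self) fun x hx =>
      (Set.ext_iff.1 hYran x).2 hx
  have horth : Wᵀ * W = 1 :=
    transpose_mul_self_eq_one_of_mul_eq (by simp [card_finset_card_le_eq_two_pow]) hker hW
      (transpose_VEnum_mul_VEnum (by omega) hYinj hYran hZinj hZran)
  refine AI_eq_of_forall_le_degB rfl fun g hg => succ_le_degB_of_flip hW hker horth
    hi.injective hj.injective hsub (fun r => ?_) (fun r => ?_) hg
  · simp only [hZY, hYinj.eq_iff, exists_false, false_or, Set.mem_range, hFY]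
    split_ifs <;> rfl
  · simp only [hYZ, hZinj.eq_iff, exists_false, or_false, Set.mem_range, hFZ]
    split_ifs <;> rfl

/-- with `W` the (unique) matrix satisfying `W · V(1_F) = V(0_F)`
(i.e. `W = V(0_F) · V(1_F)⁻¹`), if the `k × k` submatrix of `W` with rows `i₁ < … < i_k` and
columns `j₁ < … < j_k` is invertible, then the function obtained from `F` by flipping the
values at `Z_{i₁},…,Z_{i_k},Y_{j₁},…,Y_{j_k}` has maximum algebraic immunity `t+1`. -/
theorem stmt_6 (n t : ℕ) (hn : n = 2 * t + 1)
    (F : (Fin n → ZMod 2) → ZMod 2) (hF : AI F = t + 1)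
    (Y Z : Fin (2 ^ (n - 1)) → (Fin n → ZMod 2))
    (hYinj : Function.Injective Y) (hYran : Set.range Y = {x | F x = 1})
    (hZinj : Function.Injective Z) (hZran : Set.range Z = {x | F x = 0})
    (W : Matrix (Fin (2 ^ (n - 1))) (Fin (2 ^ (n - 1))) (ZMod 2))
    (hW : W * VEnum t Y = VEnum t Z)
    (k : ℕ) (hk1 : 1 ≤ k) (hk2 : k ≤ 2 ^ (n - 1))
    (i j : Fin k → Fin (2 ^ (n - 1))) (hi : StrictMono i) (hj : StrictMono j)
    (hsub : IsUnit (W.submatrix i j).det) :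
    AI (fun X => if (∃ a, Z (i a) = X) ∨ (∃ a, Y (j a) = X) then F X + 1 else F X)
      = t + 1 :=
  stmt_6_general n t hn F hF Y Z hYinj hYran hZinj hZran W hW k i j hi hj hsub
end
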